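/- arXiv:1706.08892 — 4 statements merged into one kernel-verified Lean document; each statement's English description precedes it below -/
import Mathlib

section
/- Let a, b : [0,∞) → ℝ be continuous with a(t) ≤ A and 0 < b₁ < b(t) < b₂ for all t ≥ 0, where A, b₁, b₂ are positive constants. Assume J := ∫₀^∞ b(t) exp(∫₀^t a(s) ds) dt < ∞, and that there exists t₀ ≥ 0 with a(t) ≤ 0 for all t ≥ t₀. Then every differentiable z : [0,∞) → ℝ with z'(t) = a(t)z(t) − b(t)z(t)² for all t ≥ 0 and z(0) > 0 satisfies z(t) → 0 as t → ∞. -/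
/-!
Writing the equation as `z' = (a - b z) z` shows `z t = z 0 * exp (∫₀ᵗ (a - b z))`, so `z` stays
positive and then `0 < z ≤ z 0 * μ`. As `b ≥ b₁ > 0`, finiteness of `J` makes `μ` integrable, and
`μ` is nonincreasing from `t₀` on; a nonnegative eventually antitone integrable function tends to
`0`, since `(t - t₀) μ t ≤ ∫_{t₀}^t μ` stays bounded.
-/

open Real Filter MeasureTheory Set intervalIntegral Topology

lemma ContinuousOn.intervalIntegrable_of_Ici {f : ℝ → ℝ} {c s t : ℝ}
    (hf : ContinuousOn f (Ici c)) (hs : c ≤ s) (ht : c ≤ t) :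
    IntervalIntegrable f volume s t :=
  (hf.mono fun _ hx => le_trans (le_min hs ht) hx.1).intervalIntegrable

lemma ContinuousOn.hasDerivWithinAt_integral_Ici {f : ℝ → ℝ} {c t : ℝ}
    (hf : ContinuousOn f (Ici c)) (ht : c ≤ t) :
    HasDerivWithinAt (fun u => ∫ x in c..u, f x) (f t) (Ici c) t := by
  have hint := hf.intervalIntegrable_of_Ici le_rfl ht
  have hmeas := hf.aestronglyMeasurable (μ := volume) measurableSet_Ici
  rcases ht.eq_or_lt with rfl | hlt
  · exact integral_hasDerivWithinAt_right hint
      ⟨Ici c, mem_of_superset self_mem_nhdsWithin Ioi_subset_Ici_self, hmeas⟩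
      ((hf.continuousWithinAt self_mem_Ici).mono Ioi_subset_Ici_self)
  · have hnhds : Ici c ∈ 𝓝 t := Ici_mem_nhds hlt
    exact (integral_hasDerivAt_right hint ⟨Ici c, hnhds, hmeas⟩
      (hf.continuousAt hnhds)).hasDerivWithinAt

lemma eq_mul_exp_integral_of_hasDerivWithinAt {q z : ℝ → ℝ} {c : ℝ}
    (hq : ContinuousOn q (Ici c))
    (hz : ∀ t ≥ c, HasDerivWithinAt z (q t * z t) (Ici c) t) {t : ℝ} (ht : c ≤ t) :
    z t = z c * exp (∫ s in c..t, q s) := by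
  set χ : ℝ → ℝ := fun u => z u * exp (-∫ s in c..u, q s)
  have hχ : ∀ u ≥ c, HasDerivWithinAt χ 0 (Ici c) u := fun u hu =>
    ((hz u hu).mul (hq.hasDerivWithinAt_integral_Ici hu).neg.exp).congr_deriv (by ring)
  have hχt : χ t = χ c := constant_of_has_deriv_right_zero
    (fun u hu => (hχ u hu.1).continuousWithinAt.mono Icc_subset_Ici_self)
    (fun u hu => (hχ u hu.1).mono (Ici_subset_Ici.mpr hu.1)) t ⟨ht, le_rfl⟩
  simp only [χ, integral_same, neg_zero, exp_zero, mul_one] at hχt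
  rw [← hχt, mul_assoc, ← exp_add, neg_add_cancel, exp_zero, mul_one]

lemma tendsto_zero_of_antitoneOn_of_integrableOn {f : ℝ → ℝ} {c : ℝ}
    (hanti : AntitoneOn f (Ici c)) (hnonneg : ∀ t ≥ c, 0 ≤ f t) (hint : IntegrableOn f (Ioi c)) :
    Tendsto f atTop (𝓝 0) := by
  set K := ∫ s in Ioi c, f s
  have hbound : ∀ t > c, f t ≤ K / (t - c) := fun t ht => by
    have hmean : (t - c) * f t ≤ ∫ s in c..t, f s := by
      simpa using integral_mono_on ht.le intervalIntegrable_const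
        ((intervalIntegrable_iff_integrableOn_Ioc_of_le ht.le).2
          (hint.mono_set Ioc_subset_Ioi_self))
        (fun x hx => hanti hx.1 (hx.1.trans hx.2) hx.2)
    have htail : ∫ s in c..t, f s ≤ K := by
      rw [integral_of_le ht.le]
      exact setIntegral_mono_set hint
        ((ae_restrict_iff' measurableSet_Ioi).2 (.of_forall fun x hx => hnonneg x hx.out.le))
        Ioc_subset_Ioi_self.eventuallyLE
    rw [le_div_iff₀ (sub_pos.2 ht)]
    linarith
  exact squeeze_zero' (eventually_ge_atTop c |>.mono hnonneg)
    ((eventually_gt_atTop c).mono hbound)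
    (tendsto_const_nhds.div_atTop (tendsto_atTop_add_const_right _ _ tendsto_id))

lemma antitoneOn_exp_integral {a : ℝ → ℝ} {c t₀ : ℝ} (ha : ContinuousOn a (Ici c))
    (ht₀ : c ≤ t₀) (ha_nonpos : ∀ t ≥ t₀, a t ≤ 0) :
    AntitoneOn (fun t => exp (∫ s in c..t, a s)) (Ici t₀) := by
  intro s hs t ht hst
  have hs' : c ≤ s := ht₀.trans hs
  have htail : ∫ x in s..t, a x ≤ 0 := by
    simpa using integral_mono_on hst (ha.intervalIntegrable_of_Ici hs' (hs'.trans hst))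
      intervalIntegrable_const fun x hx => ha_nonpos x (hs.out.trans hx.1)
  rw [exp_le_exp, ← integral_add_adjacent_intervals (ha.intervalIntegrable_of_Ici le_rfl hs')
    (ha.intervalIntegrable_of_Ici hs' (hs'.trans hst))]
  linarith

lemma IntegrableOn.of_mul_left_of_le {α : Type*} [MeasurableSpace α] {μ : Measure α}
    {b g : α → ℝ} {s : Set α} {b₁ : ℝ} (hbg : IntegrableOn (fun t => b t * g t) s μ)
    (hs : MeasurableSet s) (hb₁ : 0 < b₁) (hb : ∀ t ∈ s, b₁ ≤ b t) (hg : ∀ t ∈ s, 0 ≤ g t)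
    (hgm : AEStronglyMeasurable g (μ.restrict s)) : IntegrableOn g s μ := by
  refine (hbg.const_mul b₁⁻¹).mono' hgm ((ae_restrict_iff' hs).2 (.of_forall fun t ht => ?_))
  rw [norm_of_nonneg (hg t ht), ← div_eq_inv_mul, le_div_iff₀ hb₁, mul_comm]
  exact mul_le_mul_of_nonneg_right (hb t ht) (hg t ht)

lemma logistic_pos_and_le_mul_exp_integral {a b z : ℝ → ℝ} {c : ℝ} (ha : ContinuousOn a (Ici c))
    (hb : ContinuousOn b (Ici c)) (hb_nonneg : ∀ t ≥ c, 0 ≤ b t)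
    (hz : ∀ t ≥ c, HasDerivWithinAt z (a t * z t - b t * z t ^ 2) (Ici c) t) (hzc : 0 < z c)
    {t : ℝ} (ht : c ≤ t) :
    0 < z t ∧ z t ≤ z c * exp (∫ s in c..t, a s) := by
  have hz_cont : ContinuousOn z (Ici c) := fun t ht => (hz t ht).continuousWithinAt
  have hbz_cont : ContinuousOn (fun t => b t * z t) (Ici c) := hb.mul hz_cont
  have hsol : ∀ t ≥ c, z t = z c * exp (∫ s in c..t, (a s - b s * z s)) := fun t ht =>
    eq_mul_exp_integral_of_hasDerivWithinAt (ha.sub hbz_cont)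
      (fun u hu => (hz u hu).congr_deriv (by simp only [Pi.sub_apply]; ring)) ht
  have hpos : ∀ t ≥ c, 0 < z t := fun t ht => (hsol t ht).symm ▸ mul_pos hzc (exp_pos _)
  have hbz_integral_nonneg : 0 ≤ ∫ s in c..t, b s * z s :=
    integral_nonneg ht fun u hu => mul_nonneg (hb_nonneg u hu.1) (hpos u hu.1).le
  refine ⟨hpos t ht, ?_⟩
  rw [hsol t ht, integral_sub (ha.intervalIntegrable_of_Ici le_rfl ht)
    (hbz_cont.intervalIntegrable_of_Ici le_rfl ht)]
  gcongr
  linarith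

theorem stmt2_general (a b : ℝ → ℝ) (b₁ b₂ : ℝ)
    (hb₁ : 0 < b₁)
    (ha : ContinuousOn a (Set.Ici (0:ℝ)))
    (hb : ContinuousOn b (Set.Ici (0:ℝ)))
    (hbB : ∀ t ≥ (0:ℝ), b₁ < b t ∧ b t < b₂)
    (hJ : IntegrableOn (fun t => b t * Real.exp (∫ s in (0:ℝ)..t, a s)) (Set.Ioi (0:ℝ)))
    (ht₀ : ∃ t₀ ≥ (0:ℝ), ∀ t ≥ t₀, a t ≤ 0) :
    ∀ z : ℝ → ℝ,
      (∀ t ≥ (0:ℝ), HasDerivWithinAt z (a t * z t - b t * z t ^ 2) (Set.Ici (0:ℝ)) t) →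
      z 0 > 0 →
      Tendsto z atTop (nhds 0) := by
  intro z hz hz0
  obtain ⟨t₀, ht₀, ha_nonpos⟩ := ht₀
  set μ : ℝ → ℝ := fun t => exp (∫ s in (0:ℝ)..t, a s)
  have hμ_cont : ContinuousOn μ (Ici 0) := fun t ht =>
    (ha.hasDerivWithinAt_integral_Ici ht).continuousWithinAt.rexp
  have hμ_int : IntegrableOn μ (Ioi t₀) :=
    (IntegrableOn.of_mul_left_of_le hJ measurableSet_Ioi hb₁ (fun t ht => (hbB t ht.out.le).1.le)
      (fun t _ => (exp_pos _).le)
      ((hμ_cont.mono Ioi_subset_Ici_self).aestronglyMeasurable measurableSet_Ioi)).mono_set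
      (Ioi_subset_Ioi ht₀)
  have hμ_lim : Tendsto μ atTop (𝓝 0) :=
    tendsto_zero_of_antitoneOn_of_integrableOn (antitoneOn_exp_integral ha ht₀ ha_nonpos)
      (fun t _ => (exp_pos _).le) hμ_int
  have hz_bounds := fun t (ht : 0 ≤ t) => logistic_pos_and_le_mul_exp_integral ha hb
    (fun t ht => hb₁.le.trans (hbB t ht).1.le) hz hz0 ht
  refine squeeze_zero' ((eventually_ge_atTop 0).mono fun t ht => (hz_bounds t ht).1.le)
    ((eventually_ge_atTop 0).mono fun t ht => (hz_bounds t ht).2) ?_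
  simpa using hμ_lim.const_mul (z 0)

theorem stmt2 (a b : ℝ → ℝ) (A b₁ b₂ : ℝ)
    (hA : 0 < A) (hb₁ : 0 < b₁) (hb₂ : 0 < b₂)
    (ha : ContinuousOn a (Set.Ici (0:ℝ)))
    (hb : ContinuousOn b (Set.Ici (0:ℝ)))
    (haA : ∀ t ≥ (0:ℝ), a t ≤ A)
    (hbB : ∀ t ≥ (0:ℝ), b₁ < b t ∧ b t < b₂)
    (hJ : IntegrableOn (fun t => b t * Real.exp (∫ s in (0:ℝ)..t, a s)) (Set.Ioi (0:ℝ)))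
    (ht₀ : ∃ t₀ ≥ (0:ℝ), ∀ t ≥ t₀, a t ≤ 0) :
    ∀ z : ℝ → ℝ,
      (∀ t ≥ (0:ℝ), HasDerivWithinAt z (a t * z t - b t * z t ^ 2) (Set.Ici (0:ℝ)) t) →
      z 0 > 0 →
      Tendsto z atTop (nhds 0) :=
  stmt2_general a b b₁ b₂ hb₁ ha hb hbB hJ ht₀
end

section
/- Let a, b : [0,∞) → ℝ be continuous with a(t) ≤ A and 0 < b₁ < b(t) < b₂ for all t ≥ 0, where A, b₁, b₂ are positive constants, and assume J := ∫₀^∞ b(t) exp(∫₀^t a(s) ds) dt < ∞. Then there is no differentiable z : [0,∞) → ℝ with z'(t) = a(t)z(t) − b(t)z(t)² for all t ≥ 0 and z(0) < −1/J. -/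
open Real Filter MeasureTheory Set intervalIntegral Topology

/-!
With `μ(t) = exp ∫₀ᵗ a` and `D(t) = 1 + z(0) ∫₀ᵗ b μ`, any solution satisfies
`z(t) D(t) = z(0) μ(t)`: the defect `z D - z(0) μ` vanishes at `0` and solves the linear equation
`g' = (a - b z) g`, so it vanishes identically by Grönwall. Since `D(0) = 1` and
`D(t) → 1 + z(0) J < 0`, `D` has a zero `t₁`, where `z(0) μ(t₁) = 0`, which is absurd.
-/

theorem setIntegral_pos_of_forall_pos {X : Type*} [MeasurableSpace X] {μ : Measure X}
    {f : X → ℝ} {s : Set X} (hs : MeasurableSet s) (hμs : 0 < μ s) (hf : IntegrableOn f s μ)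
    (hpos : ∀ x ∈ s, 0 < f x) : 0 < ∫ x in s, f x ∂μ := by
  rw [setIntegral_pos_iff_support_of_nonneg_ae
    (ae_restrict_of_forall_mem hs fun x hx => (hpos x hx).le) hf]
  rwa [show Function.support f ∩ s = s from inter_eq_right.mpr fun x hx => (hpos x hx).ne']

theorem hasDerivWithinAt_integral_of_continuousOn_Ici {E : Type*} [NormedAddCommGroup E]
    [NormedSpace ℝ E] [CompleteSpace E] {f : ℝ → E} {c x : ℝ} (hf : ContinuousOn f (Ici c))
    (hx : c ≤ x) : HasDerivWithinAt (fun u => ∫ s in c..u, f s) (f x) (Ici c) x := by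
  set g : ℝ → E := fun s => f (max c s)
  have hg : Continuous g :=
    hf.comp_continuous (continuous_const.max continuous_id) fun s => le_max_left c s
  have hfg : EqOn f g (Ici c) := fun s hs => by simp only [g, max_eq_right (mem_Ici.mp hs)]
  have hprim : EqOn (fun u => ∫ s in c..u, f s) (fun u => ∫ s in c..u, g s) (Ici c) :=
    fun u hu => integral_congr fun s hs => hfg (by rw [uIcc_of_le hu] at hs; exact hs.1)
  have hderiv := (hg.integral_hasStrictDerivAt c x).hasDerivAt.hasDerivWithinAt (s := Ici c)
  rw [← hfg hx] at hderiv
  exact hderiv.congr hprim (hprim hx)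

noncomputable def growthFactor (a : ℝ → ℝ) (t : ℝ) : ℝ := exp (∫ s in (0:ℝ)..t, a s)

theorem growthFactor_pos (a : ℝ → ℝ) (t : ℝ) : 0 < growthFactor a t := exp_pos _

theorem growthFactor_zero (a : ℝ → ℝ) : growthFactor a 0 = 1 := by
  simp [growthFactor]

theorem hasDerivWithinAt_growthFactor {a : ℝ → ℝ} (ha : ContinuousOn a (Ici 0)) {t : ℝ}
    (ht : 0 ≤ t) : HasDerivWithinAt (growthFactor a) (a t * growthFactor a t) (Ici 0) t := by
  rw [mul_comm]
  exact (hasDerivWithinAt_integral_of_continuousOn_Ici ha ht).exp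

theorem continuousOn_growthFactor {a : ℝ → ℝ} (ha : ContinuousOn a (Ici 0)) :
    ContinuousOn (growthFactor a) (Ici 0) :=
  fun _ ht => (hasDerivWithinAt_growthFactor ha ht).continuousWithinAt

/-- The denominator `D(t) = 1 + z₀ ∫₀ᵗ b μ` of the explicit solution `z(t) = z₀ μ(t) / D(t)`. -/
noncomputable def logisticDenom (a b : ℝ → ℝ) (z₀ t : ℝ) : ℝ :=
  1 + z₀ * ∫ s in (0:ℝ)..t, b s * growthFactor a s

section LogisticDenom

variable {a b : ℝ → ℝ} {z₀ : ℝ}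

theorem logisticDenom_zero : logisticDenom a b z₀ 0 = 1 := by
  simp [logisticDenom]

theorem hasDerivWithinAt_logisticDenom (ha : ContinuousOn a (Ici 0)) (hb : ContinuousOn b (Ici 0))
    {t : ℝ} (ht : 0 ≤ t) :
    HasDerivWithinAt (logisticDenom a b z₀) (z₀ * (b t * growthFactor a t)) (Ici 0) t :=
  ((hasDerivWithinAt_integral_of_continuousOn_Ici (hb.mul (continuousOn_growthFactor ha))
    ht).const_mul z₀).const_add 1

theorem continuousOn_logisticDenom (ha : ContinuousOn a (Ici 0)) (hb : ContinuousOn b (Ici 0)) :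
    ContinuousOn (logisticDenom a b z₀) (Ici 0) :=
  fun _ ht => (hasDerivWithinAt_logisticDenom ha hb ht).continuousWithinAt

theorem tendsto_logisticDenom_atTop
    (hint : IntegrableOn (fun t => b t * growthFactor a t) (Ioi 0)) :
    Tendsto (logisticDenom a b z₀) atTop
      (𝓝 (1 + z₀ * ∫ t in Ioi (0:ℝ), b t * growthFactor a t)) :=
  ((intervalIntegral_tendsto_integral_Ioi 0 hint tendsto_id).const_mul z₀).const_add 1

theorem exists_logisticDenom_eq_zero (ha : ContinuousOn a (Ici 0)) (hb : ContinuousOn b (Ici 0))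
    (hint : IntegrableOn (fun t => b t * growthFactor a t) (Ioi 0))
    (hneg : 1 + z₀ * ∫ t in Ioi (0:ℝ), b t * growthFactor a t < 0) :
    ∃ t ≥ 0, logisticDenom a b z₀ t = 0 := by
  obtain ⟨T, hT, hT0⟩ := (((tendsto_logisticDenom_atTop (z₀ := z₀) hint).eventually
    (gt_mem_nhds hneg)).and (eventually_ge_atTop 0)).exists
  obtain ⟨t, ht, hzero⟩ := intermediate_value_Icc' hT0
    ((continuousOn_logisticDenom ha hb).mono Icc_subset_Ici_self)
    ⟨hT.le, logisticDenom_zero (a := a) (b := b) (z₀ := z₀) ▸ zero_le_one⟩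
  exact ⟨t, ht.1, hzero⟩

end LogisticDenom

section LogisticSolution

variable {a b z : ℝ → ℝ}

theorem hasDerivWithinAt_logistic_defect (ha : ContinuousOn a (Ici 0))
    (hb : ContinuousOn b (Ici 0))
    (hz : ∀ t ≥ (0:ℝ), HasDerivWithinAt z (a t * z t - b t * z t ^ 2) (Ici 0) t)
    {t : ℝ} (ht : 0 ≤ t) :
    HasDerivWithinAt (fun u => z u * logisticDenom a b (z 0) u - z 0 * growthFactor a u)
      ((a t - b t * z t) * (z t * logisticDenom a b (z 0) t - z 0 * growthFactor a t))
      (Ici 0) t :=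
  (((hz t ht).mul (hasDerivWithinAt_logisticDenom ha hb ht)).sub
    ((hasDerivWithinAt_growthFactor ha ht).const_mul (z 0))).congr_deriv (by ring)

theorem mul_logisticDenom_eq (ha : ContinuousOn a (Ici 0)) (hb : ContinuousOn b (Ici 0))
    (hz : ∀ t ≥ (0:ℝ), HasDerivWithinAt z (a t * z t - b t * z t ^ 2) (Ici 0) t)
    {t : ℝ} (ht : 0 ≤ t) : z t * logisticDenom a b (z 0) t = z 0 * growthFactor a t := by
  set g := fun u => z u * logisticDenom a b (z 0) u - z 0 * growthFactor a u
  have hderiv := fun u (hu : u ∈ Ici (0:ℝ)) => hasDerivWithinAt_logistic_defect ha hb hz hu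
  have hzc : ContinuousOn z (Ici 0) := fun u hu => (hz u hu).continuousWithinAt
  obtain ⟨K, hK⟩ := isCompact_Icc.exists_bound_of_continuousOn
    ((ha.sub (hb.mul hzc)).mono (Icc_subset_Ici_self : Icc 0 t ⊆ Ici 0))
  have hg : g t = 0 := eq_zero_of_abs_deriv_le_mul_abs_self_of_eq_zero_right (K := K)
    (fun u hu => (hderiv u hu.1).continuousWithinAt.mono Icc_subset_Ici_self)
    (fun u hu => (hderiv u hu.1).mono (Ici_subset_Ici.mpr hu.1))
    (by simp only [logisticDenom_zero, growthFactor_zero, mul_one, sub_self])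
    (fun u hu => by
      rw [norm_mul]
      exact mul_le_mul_of_nonneg_right (hK u (Ico_subset_Icc_self hu)) (norm_nonneg _))
    t ⟨ht, le_rfl⟩
  exact sub_eq_zero.mp hg

end LogisticSolution

theorem stmt4_general (a b : ℝ → ℝ) (b₁ b₂ J : ℝ)
    (hb₁ : 0 < b₁)
    (ha : ContinuousOn a (Set.Ici (0:ℝ)))
    (hb : ContinuousOn b (Set.Ici (0:ℝ)))
    (hbB : ∀ t ≥ (0:ℝ), b₁ < b t ∧ b t < b₂)
    (hint : IntegrableOn (fun t => b t * Real.exp (∫ s in (0:ℝ)..t, a s)) (Set.Ioi (0:ℝ)))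
    (hJ : J = ∫ t in Set.Ioi (0:ℝ), b t * Real.exp (∫ s in (0:ℝ)..t, a s)) :
    ¬ ∃ z : ℝ → ℝ,
      (∀ t ≥ (0:ℝ), HasDerivWithinAt z (a t * z t - b t * z t ^ 2) (Set.Ici (0:ℝ)) t) ∧
      z 0 < -(1 / J) := by
  rintro ⟨z, hz, hz0⟩
  have hJpos : 0 < J := hJ ▸ setIntegral_pos_of_forall_pos measurableSet_Ioi (by simp) hint
    fun t ht => mul_pos (hb₁.trans (hbB t (le_of_lt ht)).1) (growthFactor_pos a t)
  have hz0neg : z 0 < 0 := hz0.trans (by simpa using hJpos)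
  have hlimit : 1 + z 0 * J < 0 := by
    have := mul_lt_mul_of_pos_right hz0 hJpos
    field_simp at this
    linarith
  obtain ⟨t, ht, hD⟩ := exists_logisticDenom_eq_zero ha hb hint (hJ ▸ hlimit)
  have hformula := mul_logisticDenom_eq ha hb hz ht
  rw [hD, mul_zero, eq_comm] at hformula
  exact (mul_neg_of_neg_of_pos hz0neg (growthFactor_pos a t)).ne hformula

theorem stmt4 (a b : ℝ → ℝ) (A b₁ b₂ J : ℝ)
    (hA : 0 < A) (hb₁ : 0 < b₁) (hb₂ : 0 < b₂)
    (ha : ContinuousOn a (Set.Ici (0:ℝ)))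
    (hb : ContinuousOn b (Set.Ici (0:ℝ)))
    (haA : ∀ t ≥ (0:ℝ), a t ≤ A)
    (hbB : ∀ t ≥ (0:ℝ), b₁ < b t ∧ b t < b₂)
    (hint : IntegrableOn (fun t => b t * Real.exp (∫ s in (0:ℝ)..t, a s)) (Set.Ioi (0:ℝ)))
    (hJ : J = ∫ t in Set.Ioi (0:ℝ), b t * Real.exp (∫ s in (0:ℝ)..t, a s)) :
    ¬ ∃ z : ℝ → ℝ,
      (∀ t ≥ (0:ℝ), HasDerivWithinAt z (a t * z t - b t * z t ^ 2) (Set.Ici (0:ℝ)) t) ∧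
      z 0 < -(1 / J) :=
  stmt4_general a b b₁ b₂ J hb₁ ha hb hbB hint hJ
end

section
/- Let a, b : [0,∞) → ℝ be continuous with a(t) ≤ A and 0 < b₁ < b(t) < b₂ for all t ≥ 0, where A, b₁, b₂ are positive constants, and assume J := ∫₀^∞ b(t) exp(∫₀^t a(s) ds) dt < ∞. Let z₀ ∈ [−1/J, 0) and set c = 1/z₀. Then c + ∫₀^t b(s)μ(s) ds < 0 for all t ≥ 0 (where μ(t) = exp(∫₀^t a(s) ds)), and the function z(t) = μ(t)/(c + ∫₀^t b(s)μ(s) ds) is a differentiable negative solution of z'(t) = a(t)z(t) − b(t)z(t)² on all of [0,∞) with z(0) = z₀. -/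
/-! With `μ = exp (∫ a)`, the Bernoulli substitution `z = μ / D` turns the logistic equation into
`D' = b μ`, so `D t = 1 / z₀ + ∫₀ᵗ b μ`. Since `b μ > 0` is integrable on `(0, ∞)`, the integral
`∫₀ᵗ b μ` stays strictly below its limit `J`, and `1 / z₀ ≤ -J` keeps `D` negative on `[0, ∞)`. -/

open Real Filter MeasureTheory Set intervalIntegral

theorem hasDerivWithinAt_integral_of_continuousOn_Ici_s5 {f : ℝ → ℝ} {x₀ t : ℝ}
    (hf : ContinuousOn f (Ici x₀)) (ht : x₀ ≤ t) :
    HasDerivWithinAt (fun u => ∫ s in x₀..u, f s) (f t) (Ici x₀) t := by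
  have hint : IntervalIntegrable f volume x₀ t :=
    (hf.mono (by rw [uIcc_of_le ht]; exact Icc_subset_Ici_self)).intervalIntegrable
  have hmeas : AEStronglyMeasurable f (volume.restrict (Ioi x₀)) :=
    (hf.mono Ioi_subset_Ici_self).aestronglyMeasurable measurableSet_Ioi
  rcases ht.eq_or_lt with rfl | ht
  · exact integral_hasDerivWithinAt_right hint ⟨Ioi x₀, self_mem_nhdsWithin, hmeas⟩
      ((hf x₀ self_mem_Ici).mono Ioi_subset_Ici_self)
  · exact (integral_hasDerivAt_right hint ⟨Ioi x₀, Ioi_mem_nhds ht, hmeas⟩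
      (hf.continuousAt (Ici_mem_nhds ht))).hasDerivWithinAt

theorem intervalIntegral_lt_integral_Ioi {f : ℝ → ℝ} {x₀ t : ℝ}
    (hf : IntegrableOn f (Ioi x₀)) (hpos : ∀ s > t, 0 < f s) (ht : x₀ ≤ t) :
    ∫ s in x₀..t, f s < ∫ s in Ioi x₀, f s := by
  have htail_int : IntegrableOn f (Ioi t) := hf.mono_set (Ioi_subset_Ioi ht)
  have htail : 0 < ∫ s in Ioi t, f s := by
    rw [setIntegral_pos_iff_support_of_nonneg_ae
      ((ae_restrict_mem measurableSet_Ioi).mono fun s hs => (hpos s hs).le) htail_int]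
    calc (0 : ENNReal) < volume (Ioi t) := by simp
      _ ≤ volume (Function.support f ∩ Ioi t) :=
        measure_mono fun s hs => ⟨(hpos s hs).ne', hs⟩
  linarith [integral_Ioi_sub_Ioi hf ht]

theorem HasDerivWithinAt.div_logistic {μ D : ℝ → ℝ} {s : Set ℝ} {t α β : ℝ}
    (hμ : HasDerivWithinAt μ (α * μ t) s t) (hD : HasDerivWithinAt D (β * μ t) s t)
    (hD₀ : D t ≠ 0) :
    HasDerivWithinAt (fun u => μ u / D u) (α * (μ t / D t) - β * (μ t / D t) ^ 2) s t :=
  (hμ.div hD hD₀).congr_deriv (by field_simp)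

theorem stmt5_general (a b : ℝ → ℝ) (b₁ b₂ J z₀ : ℝ)
    (hb₁ : 0 < b₁)
    (ha : ContinuousOn a (Set.Ici (0:ℝ)))
    (hb : ContinuousOn b (Set.Ici (0:ℝ)))
    (hbB : ∀ t ≥ (0:ℝ), b₁ < b t ∧ b t < b₂)
    (hint : IntegrableOn (fun t => b t * Real.exp (∫ s in (0:ℝ)..t, a s)) (Set.Ioi (0:ℝ)))
    (hJ : J = ∫ t in Set.Ioi (0:ℝ), b t * Real.exp (∫ s in (0:ℝ)..t, a s))
    (hz₀ : z₀ ∈ Set.Ico (-(1 / J)) 0) :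
    (∀ t ≥ (0:ℝ),
      1 / z₀ + (∫ s in (0:ℝ)..t, b s * Real.exp (∫ u in (0:ℝ)..s, a u)) < 0) ∧
    (∀ t ≥ (0:ℝ),
      HasDerivWithinAt
        (fun t => Real.exp (∫ s in (0:ℝ)..t, a s) /
          (1 / z₀ + ∫ s in (0:ℝ)..t, b s * Real.exp (∫ u in (0:ℝ)..s, a u)))
        (a t * (Real.exp (∫ s in (0:ℝ)..t, a s) /
            (1 / z₀ + ∫ s in (0:ℝ)..t, b s * Real.exp (∫ u in (0:ℝ)..s, a u))) -
          b t * (Real.exp (∫ s in (0:ℝ)..t, a s) /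
            (1 / z₀ + ∫ s in (0:ℝ)..t, b s * Real.exp (∫ u in (0:ℝ)..s, a u))) ^ 2)
        (Set.Ici (0:ℝ)) t) ∧
    (∀ t ≥ (0:ℝ),
      Real.exp (∫ s in (0:ℝ)..t, a s) /
        (1 / z₀ + ∫ s in (0:ℝ)..t, b s * Real.exp (∫ u in (0:ℝ)..s, a u)) < 0) ∧
    Real.exp (∫ s in (0:ℝ)..(0:ℝ), a s) /
      (1 / z₀ + ∫ s in (0:ℝ)..(0:ℝ), b s * Real.exp (∫ u in (0:ℝ)..s, a u)) = z₀ := by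
  obtain ⟨hz₀J, hz₀_neg⟩ := hz₀
  set μ : ℝ → ℝ := fun t => exp (∫ s in (0:ℝ)..t, a s)
  have hμ : ∀ t ≥ (0:ℝ), HasDerivWithinAt μ (a t * μ t) (Ici 0) t := fun t ht =>
    (hasDerivWithinAt_integral_of_continuousOn_Ici_s5 ha ht).exp.congr_deriv (mul_comm _ _)
  have hbμ_cont : ContinuousOn (fun t => b t * μ t) (Ici 0) :=
    hb.mul fun t ht => (hμ t ht).continuousWithinAt
  have hbμ_pos : ∀ t > (0:ℝ), 0 < b t * μ t := fun t ht =>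
    mul_pos (hb₁.trans (hbB t ht.le).1) (exp_pos _)
  have hlt_J : ∀ t ≥ (0:ℝ), ∫ s in (0:ℝ)..t, b s * μ s < J := fun t ht =>
    hJ ▸ intervalIntegral_lt_integral_Ioi hint (fun s hs => hbμ_pos s (ht.trans_lt hs)) ht
  have hc : 1 / z₀ ≤ -J := by
    simpa using one_div_le_one_div_of_neg_of_le hz₀_neg hz₀J
  have hD_neg : ∀ t ≥ (0:ℝ), 1 / z₀ + ∫ s in (0:ℝ)..t, b s * μ s < 0 := fun t ht => by
    linarith [hlt_J t ht]
  refine ⟨hD_neg, fun t ht => ?_, fun t ht => div_neg_of_pos_of_neg (exp_pos _) (hD_neg t ht),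
    by simp⟩
  exact (hμ t ht).div_logistic
    ((hasDerivWithinAt_integral_of_continuousOn_Ici_s5 hbμ_cont ht).const_add _) (hD_neg t ht).ne

theorem stmt5 (a b : ℝ → ℝ) (A b₁ b₂ J z₀ : ℝ)
    (hA : 0 < A) (hb₁ : 0 < b₁) (hb₂ : 0 < b₂)
    (ha : ContinuousOn a (Set.Ici (0:ℝ)))
    (hb : ContinuousOn b (Set.Ici (0:ℝ)))
    (haA : ∀ t ≥ (0:ℝ), a t ≤ A)
    (hbB : ∀ t ≥ (0:ℝ), b₁ < b t ∧ b t < b₂)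
    (hint : IntegrableOn (fun t => b t * Real.exp (∫ s in (0:ℝ)..t, a s)) (Set.Ioi (0:ℝ)))
    (hJ : J = ∫ t in Set.Ioi (0:ℝ), b t * Real.exp (∫ s in (0:ℝ)..t, a s))
    (hz₀ : z₀ ∈ Set.Ico (-(1 / J)) 0) :
    (∀ t ≥ (0:ℝ),
      1 / z₀ + (∫ s in (0:ℝ)..t, b s * Real.exp (∫ u in (0:ℝ)..s, a u)) < 0) ∧
    (∀ t ≥ (0:ℝ),
      HasDerivWithinAt
        (fun t => Real.exp (∫ s in (0:ℝ)..t, a s) /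
          (1 / z₀ + ∫ s in (0:ℝ)..t, b s * Real.exp (∫ u in (0:ℝ)..s, a u)))
        (a t * (Real.exp (∫ s in (0:ℝ)..t, a s) /
            (1 / z₀ + ∫ s in (0:ℝ)..t, b s * Real.exp (∫ u in (0:ℝ)..s, a u))) -
          b t * (Real.exp (∫ s in (0:ℝ)..t, a s) /
            (1 / z₀ + ∫ s in (0:ℝ)..t, b s * Real.exp (∫ u in (0:ℝ)..s, a u))) ^ 2)
        (Set.Ici (0:ℝ)) t) ∧
    (∀ t ≥ (0:ℝ),
      Real.exp (∫ s in (0:ℝ)..t, a s) /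
        (1 / z₀ + ∫ s in (0:ℝ)..t, b s * Real.exp (∫ u in (0:ℝ)..s, a u)) < 0) ∧
    Real.exp (∫ s in (0:ℝ)..(0:ℝ), a s) /
      (1 / z₀ + ∫ s in (0:ℝ)..(0:ℝ), b s * Real.exp (∫ u in (0:ℝ)..s, a u)) = z₀ :=
  stmt5_general a b b₁ b₂ J z₀ hb₁ ha hb hbB hint hJ hz₀
end

section
/- Let a, γ : ℝ → ℝ be continuous, T-periodic (T > 0), and bounded above and below by positive constants, and let k̄ > 0 be such that the equation z'(t) = a(t)z(t) − z(t)² − k̄γ(t) has exactly one positive T-periodic solution p, while for every k > k̄ the equation z'(t) = a(t)z(t) − z(t)² − kγ(t) has no T-periodic solution. Then every differentiable solution z : [0,∞) → ℝ of z'(t) = a(t)z(t) − z(t)² − k̄γ(t) with z(0) > p(0) is bounded on [0,∞) and is separated from p, i.e., z(t) > p(t) for all t ≥ 0 and ∫₀^∞ (z(t) − p(t)) dt = ∞. -/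
open Real Filter MeasureTheory Set intervalIntegral Function

/-!
Linearizing at `p` gives the coefficient `g = a - 2p`. If `∫₀ᵀ g ≠ 0`, then with
`E t = exp ∫₀ᵗ g`, `μ = exp ∫₀ᵀ g` and `G t = ∫ₜᵗ⁺ᵀ E`, the function `p - (1 - μ) E / G` is a
second periodic solution, and it is positive because at its minimum the equation forces
`q (a - q) = k γ > 0`; uniqueness of `p` therefore gives `∫₀ᵀ g = 0`, so `E` is periodic.
The difference `w = z - p` solves the Bernoulli equation `w' = g w - w²`, whence
`w t (1 / w 0 + ∫₀ᵗ E) = E t`. Thus `w > 0` and `∫₀ˢ w = log (1 / w 0 + ∫₀ˢ E) - log (1 / w 0)`,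
which tends to `∞` because `E` is periodic and positive. Boundedness holds because `z' < 0`
whenever `z = max (z 0) (sup a)`.
-/

theorem Function.Periodic.exists_forall_le_of_continuous {α : Type*} [TopologicalSpace α]
    [LinearOrder α] [ClosedIicTopology α] {f : ℝ → α} {T : ℝ} (hf : Periodic f T) (hT : T ≠ 0)
    (hc : Continuous f) : ∃ t₀, ∀ t, f t₀ ≤ f t := by
  obtain ⟨_, ⟨t₀, rfl⟩, h⟩ := (hf.compact_of_continuous hT hc).exists_isLeast (range_nonempty f)
  exact ⟨t₀, fun t => h ⟨t, rfl⟩⟩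

theorem pos_of_periodic_of_hasDerivAt_logistic {a f q : ℝ → ℝ} {T : ℝ} (hT : T ≠ 0)
    (ha : ∀ t, 0 ≤ a t) (hf : ∀ t, 0 < f t)
    (hq : ∀ t, HasDerivAt q (a t * q t - q t ^ 2 - f t) t) (hper : Periodic q T) (t : ℝ) :
    0 < q t := by
  obtain ⟨t₀, ht₀⟩ := hper.exists_forall_le_of_continuous hT
    (continuous_iff_continuousAt.2 fun t => (hq t).continuousAt)
  have hcrit : a t₀ * q t₀ - q t₀ ^ 2 - f t₀ = 0 :=
    IsLocalMin.hasDerivAt_eq_zero (Eventually.of_forall ht₀) (hq t₀)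
  have hmin : 0 < q t₀ := by
    by_contra! h
    nlinarith [hf t₀, mul_nonpos_of_nonneg_of_nonpos (ha t₀) h]
  exact hmin.trans_le (ht₀ t)

noncomputable def integratingFactor (g : ℝ → ℝ) (t : ℝ) : ℝ := exp (∫ s in (0:ℝ)..t, g s)

section IntegratingFactor

variable {g : ℝ → ℝ}

theorem integratingFactor_pos (t : ℝ) : 0 < integratingFactor g t := exp_pos _

theorem integratingFactor_zero : integratingFactor g 0 = 1 := by
  simp [integratingFactor]

theorem hasDerivAt_integratingFactor (hg : Continuous g) (t : ℝ) :
    HasDerivAt (integratingFactor g) (integratingFactor g t * g t) t :=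
  (hg.integral_hasStrictDerivAt 0 t).hasDerivAt.exp

theorem continuous_integratingFactor (hg : Continuous g) : Continuous (integratingFactor g) :=
  continuous_iff_continuousAt.2 fun t => (hasDerivAt_integratingFactor hg t).continuousAt

theorem integratingFactor_add_period {T : ℝ} (hg : Continuous g) (hper : Periodic g T) (t : ℝ) :
    integratingFactor g (t + T) = exp (∫ s in (0:ℝ)..T, g s) * integratingFactor g t := by
  rw [integratingFactor, integratingFactor,
    hper.intervalIntegral_add_eq_add 0 t fun _ _ => hg.intervalIntegrable _ _, zero_add,
    exp_add, mul_comm]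

end IntegratingFactor

theorem exists_periodic_hasDerivAt_bernoulli {g : ℝ → ℝ} {T : ℝ} (hT : 0 < T) (hg : Continuous g)
    (hper : Periodic g T) (hc : ∫ s in (0:ℝ)..T, g s ≠ 0) :
    ∃ v : ℝ → ℝ, (∀ t, HasDerivAt v (g t * v t + v t ^ 2) t) ∧ Periodic v T ∧ ∀ t, v t ≠ 0 := by
  set E := integratingFactor g
  set μ := exp (∫ s in (0:ℝ)..T, g s)
  have hE : Continuous E := continuous_integratingFactor hg
  have hEper : ∀ t, E (t + T) = μ * E t := integratingFactor_add_period hg hper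
  set G : ℝ → ℝ := fun t => ∫ s in t..t + T, E s
  have hGpos : ∀ t, 0 < G t := fun t =>
    intervalIntegral_pos_of_pos_on (hE.intervalIntegrable _ _)
      (fun s _ => integratingFactor_pos s) (by linarith)
  have hGper : ∀ t, G (t + T) = μ * G t := fun t => by
    simp only [G, ← integral_comp_add_right, hEper, intervalIntegral.integral_const_mul]
  have hG : ∀ t, HasDerivAt G ((μ - 1) * E t) t := fun t => by
    have hdiff : G = fun u => (∫ s in (0:ℝ)..u + T, E s) - ∫ s in (0:ℝ)..u, E s := funext fun u =>
      (integral_interval_sub_left (hE.intervalIntegrable _ _) (hE.intervalIntegrable _ _)).symm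
    rw [hdiff, sub_mul, one_mul, ← hEper]
    exact ((hE.integral_hasStrictDerivAt 0 (t + T)).hasDerivAt.comp_add_const t T).sub
      (hE.integral_hasStrictDerivAt 0 t).hasDerivAt
  have hμ : 1 - μ ≠ 0 := sub_ne_zero.2 fun h => hc (exp_eq_one_iff _ |>.1 h.symm)
  refine ⟨fun t => (1 - μ) * E t / G t, fun t => ?_, fun t => ?_, fun t => ?_⟩
  · refine (((hasDerivAt_integratingFactor hg t).const_mul (1 - μ)).div (hG t)
      (hGpos t).ne').congr_deriv ?_
    field_simp
    ring
  · simp only [hEper, hGper]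
    rw [mul_left_comm, mul_div_mul_left _ _ (exp_pos _).ne']
  · exact div_ne_zero (mul_ne_zero hμ (integratingFactor_pos t).ne') (hGpos t).ne'

theorem integral_linearization_eq_zero {a f p : ℝ → ℝ} {T : ℝ} (hT : 0 < T) (ha : Continuous a)
    (haper : Periodic a T) (ha₀ : ∀ t, 0 ≤ a t) (hf : ∀ t, 0 < f t)
    (hp : ∀ t, HasDerivAt p (a t * p t - p t ^ 2 - f t) t) (hpper : Periodic p T)
    (hunique : ∀ q : ℝ → ℝ, (∀ t, HasDerivAt q (a t * q t - q t ^ 2 - f t) t) →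
      (∀ t, 0 < q t) → Periodic q T → q = p) :
    ∫ t in (0:ℝ)..T, (a t - 2 * p t) = 0 := by
  by_contra hc
  have hpc : Continuous p := continuous_iff_continuousAt.2 fun t => (hp t).continuousAt
  obtain ⟨v, hv, hvper, hv₀⟩ :=
    exists_periodic_hasDerivAt_bernoulli (g := fun t => a t - 2 * p t) hT
      (ha.sub (continuous_const.mul hpc)) (fun t => by simp only [haper t, hpper t]) hc
  have hq : ∀ t, HasDerivAt (fun t => p t - v t) (a t * (p t - v t) - (p t - v t) ^ 2 - f t) t :=
    fun t => ((hp t).sub (hv t)).congr_deriv (by ring)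
  have hqper : Periodic (fun t => p t - v t) T := fun t => by simp only [hpper t, hvper t]
  have hqp := hunique _ hq (pos_of_periodic_of_hasDerivAt_logistic hT.ne' ha₀ hf hq hqper) hqper
  exact hv₀ 0 (by simpa using congrFun hqp 0)

theorem eq_zero_of_hasDerivWithinAt_mul {F h : ℝ → ℝ} {t₀ : ℝ} (hh : ContinuousOn h (Ici t₀))
    (hF : ∀ t ≥ t₀, HasDerivWithinAt F (h t * F t) (Ici t₀) t) (hF₀ : F t₀ = 0) {t : ℝ}
    (ht : t₀ ≤ t) : F t = 0 := by
  obtain ⟨K, hK⟩ := (isCompact_Icc (a := t₀) (b := t)).exists_bound_of_continuousOn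
    (hh.mono Icc_subset_Ici_self)
  have hFc : ContinuousOn F (Icc t₀ t) := fun x hx =>
    (hF x hx.1).continuousWithinAt.mono Icc_subset_Ici_self
  have hgronwall := norm_le_gronwallBound_of_norm_deriv_right_le (δ := 0) (ε := 0) hFc
    (fun x hx => (hF x hx.1).mono (Ici_subset_Ici.2 hx.1)) (by simp [hF₀])
    (fun x hx => by
      rw [norm_mul, add_zero]
      exact mul_le_mul_of_nonneg_right (hK x (Ico_subset_Icc_self hx)) (norm_nonneg _))
    t ⟨ht, le_rfl⟩
  rw [gronwallBound_ε0_δ0] at hgronwall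
  exact norm_le_zero_iff.1 hgronwall

section Bernoulli

variable {g w : ℝ → ℝ}

theorem add_integral_integratingFactor_pos {u : ℝ} (hu : 0 < u) {t : ℝ} (ht : 0 ≤ t) :
    0 < u + ∫ s in (0:ℝ)..t, integratingFactor g s :=
  add_pos_of_pos_of_nonneg hu (integral_nonneg ht fun s _ => (integratingFactor_pos s).le)

variable (hg : Continuous g)
  (hw : ∀ t ≥ 0, HasDerivWithinAt w (g t * w t - w t ^ 2) (Ici 0) t)
include hg hw

theorem mul_inv_add_integral_eq_integratingFactor (hw₀ : w 0 ≠ 0) {t : ℝ} (ht : 0 ≤ t) :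
    w t * ((w 0)⁻¹ + ∫ s in (0:ℝ)..t, integratingFactor g s) = integratingFactor g t := by
  have hH : ∀ t, HasDerivAt (fun t => ∫ s in (0:ℝ)..t, integratingFactor g s)
      (integratingFactor g t) t := fun t =>
    ((continuous_integratingFactor hg).integral_hasStrictDerivAt 0 t).hasDerivAt
  -- the defect satisfies the linear equation `F' = (g - w) F` and vanishes at `0`
  refine sub_eq_zero.1 <| eq_zero_of_hasDerivWithinAt_mul (h := fun t => g t - w t)
    (F := fun t => w t * ((w 0)⁻¹ + ∫ s in (0:ℝ)..t, integratingFactor g s) - integratingFactor g t)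
    (hg.continuousOn.sub fun t ht => (hw t ht).continuousWithinAt) (fun t ht => ?_) ?_ ht
  · exact (((hw t ht).mul ((hH t).const_add _).hasDerivWithinAt).sub
      (hasDerivAt_integratingFactor hg t).hasDerivWithinAt).congr_deriv (by ring)
  · simp [integratingFactor_zero, hw₀]

theorem pos_of_hasDerivWithinAt_bernoulli (hw₀ : 0 < w 0) {t : ℝ} (ht : 0 ≤ t) : 0 < w t := by
  have h := mul_inv_add_integral_eq_integratingFactor hg hw hw₀.ne' ht
  have hE := integratingFactor_pos (g := g) t
  rw [← h] at hE
  exact pos_of_mul_pos_left hE (add_integral_integratingFactor_pos (inv_pos.2 hw₀) ht).le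

theorem integral_eq_log_of_hasDerivWithinAt_bernoulli (hw₀ : 0 < w 0) {S : ℝ} (hS : 0 ≤ S) :
    ∫ t in (0:ℝ)..S, w t =
      log ((w 0)⁻¹ + ∫ s in (0:ℝ)..S, integratingFactor g s) - log (w 0)⁻¹ := by
  have hlog : ∀ t ∈ uIcc 0 S, HasDerivAt
      (fun t => log ((w 0)⁻¹ + ∫ s in (0:ℝ)..t, integratingFactor g s)) (w t) t := by
    intro t ht
    rw [uIcc_of_le hS] at ht
    have hD := add_integral_integratingFactor_pos (g := g) (inv_pos.2 hw₀) ht.1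
    rw [eq_div_of_mul_eq hD.ne' (mul_inv_add_integral_eq_integratingFactor hg hw hw₀.ne' ht.1)]
    exact (((continuous_integratingFactor hg).integral_hasStrictDerivAt 0 t).hasDerivAt.const_add
      _).log hD.ne'
  have hwc : ContinuousOn w (uIcc 0 S) := fun t ht =>
    (hw t (uIcc_of_le hS ▸ ht).1).continuousWithinAt.mono (uIcc_of_le hS ▸ Icc_subset_Ici_self)
  simp [integral_eq_sub_of_hasDerivAt hlog hwc.intervalIntegrable]

end Bernoulli

theorem le_max_of_hasDerivWithinAt_logistic {a f z : ℝ → ℝ} {M : ℝ} (hM : 0 ≤ M)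
    (haM : ∀ t, a t ≤ M) (hf : ∀ t, 0 < f t)
    (hz : ∀ t ≥ 0, HasDerivWithinAt z (a t * z t - z t ^ 2 - f t) (Ici 0) t) {t : ℝ}
    (ht : 0 ≤ t) : z t ≤ max (z 0) M := by
  refine image_le_of_deriv_right_lt_deriv_boundary' (a := 0) (b := t)
    (B := fun _ => max (z 0) M) (B' := fun _ => 0)
    (fun x hx => (hz x hx.1).continuousWithinAt.mono Icc_subset_Ici_self)
    (fun x hx => (hz x hx.1).mono (Ici_subset_Ici.2 hx.1)) (le_max_left _ _)
    continuousOn_const (fun x _ => hasDerivWithinAt_const _ _ _) (fun x _ hx => ?_) ⟨ht, le_rfl⟩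
  have hzM : M ≤ z x := hx ▸ le_max_right _ _
  nlinarith [hf x, mul_nonpos_of_nonneg_of_nonpos (hM.trans hzM) (sub_nonpos.2 ((haM x).trans hzM))]

theorem stmt11_general (a γ p : ℝ → ℝ) (T kbar a₁ a₂ γ₁ γ₂ : ℝ)
    (hT : 0 < T)
    (ha : Continuous a)
    (haper : ∀ t : ℝ, a (t + T) = a t)
    (ha₁ : 0 < a₁) (hγ₁ : 0 < γ₁)
    (haB : ∀ t : ℝ, a₁ ≤ a t ∧ a t ≤ a₂)
    (hγB : ∀ t : ℝ, γ₁ ≤ γ t ∧ γ t ≤ γ₂)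
    (hkbar : 0 < kbar)
    (hp : ∀ t : ℝ, HasDerivAt p (a t * p t - p t ^ 2 - kbar * γ t) t)
    (hppos : ∀ t : ℝ, 0 < p t)
    (hpper : ∀ t : ℝ, p (t + T) = p t)
    (hpunique : ∀ q : ℝ → ℝ,
      (∀ t : ℝ, HasDerivAt q (a t * q t - q t ^ 2 - kbar * γ t) t) →
      (∀ t : ℝ, 0 < q t) → (∀ t : ℝ, q (t + T) = q t) → q = p) :
    ∀ z : ℝ → ℝ,
      (∀ t ≥ (0:ℝ), HasDerivWithinAt z (a t * z t - z t ^ 2 - kbar * γ t) (Set.Ici (0:ℝ)) t) →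
      z 0 > p 0 →
      (∃ M : ℝ, ∀ t ≥ (0:ℝ), |z t| ≤ M) ∧
      (∀ t ≥ (0:ℝ), z t > p t) ∧
      Tendsto (fun S => ∫ t in (0:ℝ)..S, z t - p t) atTop atTop := by
  intro z hz hz₀
  have ha₀ : ∀ t, 0 ≤ a t := fun t => ha₁.le.trans (haB t).1
  have hf : ∀ t, 0 < kbar * γ t := fun t => mul_pos hkbar (hγ₁.trans_le (hγB t).1)
  set g : ℝ → ℝ := fun t => a t - 2 * p t
  have hg : Continuous g :=
    ha.sub (continuous_const.mul (continuous_iff_continuousAt.2 fun t => (hp t).continuousAt))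
  have hc : ∫ t in (0:ℝ)..T, g t = 0 :=
    integral_linearization_eq_zero hT ha haper ha₀ hf hp hpper hpunique
  have hw : ∀ t ≥ 0, HasDerivWithinAt (fun t => z t - p t)
      (g t * (z t - p t) - (z t - p t) ^ 2) (Ici 0) t := fun t ht =>
    ((hz t ht).sub (hp t).hasDerivWithinAt).congr_deriv (by ring)
  have hw₀ : 0 < z 0 - p 0 := sub_pos.2 hz₀
  have hzp : ∀ t ≥ (0:ℝ), z t > p t := fun t ht =>
    sub_pos.1 (pos_of_hasDerivWithinAt_bernoulli hg hw hw₀ ht)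
  refine ⟨⟨max (z 0) a₂, fun t ht => abs_le.2 ⟨?_, ?_⟩⟩, hzp, ?_⟩
  · linarith [hppos t, hzp t ht, le_max_left (z 0) a₂, hppos 0]
  · exact le_max_of_hasDerivWithinAt_logistic ((ha₀ 0).trans (haB 0).2) (fun t => (haB t).2) hf
      hz ht
  have hEper : Periodic (integratingFactor g) T := fun t => by
    rw [integratingFactor_add_period hg (fun t => by simp only [g, haper t, hpper t]), hc,
      exp_zero, one_mul]
  have hH := hEper.tendsto_atTop_intervalIntegral_of_pos'
    ((continuous_integratingFactor hg).intervalIntegrable _ _) integratingFactor_pos hT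
  refine Tendsto.congr' ?_ (tendsto_atTop_add_const_right _ (-log (z 0 - p 0)⁻¹)
    (tendsto_log_atTop.comp (tendsto_atTop_add_const_left _ ((z 0 - p 0)⁻¹) hH)))
  filter_upwards [eventually_ge_atTop 0] with S hS
  rw [integral_eq_log_of_hasDerivWithinAt_bernoulli hg hw hw₀ hS, sub_eq_add_neg]
  rfl

theorem stmt11 (a γ p : ℝ → ℝ) (T kbar a₁ a₂ γ₁ γ₂ : ℝ)
    (hT : 0 < T)
    (ha : Continuous a) (hγ : Continuous γ)
    (haper : ∀ t : ℝ, a (t + T) = a t) (hγper : ∀ t : ℝ, γ (t + T) = γ t)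
    (ha₁ : 0 < a₁) (hγ₁ : 0 < γ₁)
    (haB : ∀ t : ℝ, a₁ ≤ a t ∧ a t ≤ a₂)
    (hγB : ∀ t : ℝ, γ₁ ≤ γ t ∧ γ t ≤ γ₂)
    (hkbar : 0 < kbar)
    (hp : ∀ t : ℝ, HasDerivAt p (a t * p t - p t ^ 2 - kbar * γ t) t)
    (hppos : ∀ t : ℝ, 0 < p t)
    (hpper : ∀ t : ℝ, p (t + T) = p t)
    (hpunique : ∀ q : ℝ → ℝ,
      (∀ t : ℝ, HasDerivAt q (a t * q t - q t ^ 2 - kbar * γ t) t) →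
      (∀ t : ℝ, 0 < q t) → (∀ t : ℝ, q (t + T) = q t) → q = p)
    (hnone : ∀ k > kbar, ¬ ∃ q : ℝ → ℝ,
      (∀ t : ℝ, HasDerivAt q (a t * q t - q t ^ 2 - k * γ t) t) ∧
      (∀ t : ℝ, q (t + T) = q t)) :
    ∀ z : ℝ → ℝ,
      (∀ t ≥ (0:ℝ), HasDerivWithinAt z (a t * z t - z t ^ 2 - kbar * γ t) (Set.Ici (0:ℝ)) t) →
      z 0 > p 0 →
      (∃ M : ℝ, ∀ t ≥ (0:ℝ), |z t| ≤ M) ∧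
      (∀ t ≥ (0:ℝ), z t > p t) ∧
      Tendsto (fun S => ∫ t in (0:ℝ)..S, z t - p t) atTop atTop :=
  stmt11_general a γ p T kbar a₁ a₂ γ₁ γ₂ hT ha haper ha₁ hγ₁ haB hγB hkbar hp hppos hpper hpunique
end
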